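/- There exist permutations σ₁, σ₂, σ₃, σ₄ in the symmetric group S₈ on 8 letters such that: σ₁ has cycle type {3,2,2} (a 3-cycle times two disjoint transpositions), σ₂ and σ₃ each have cycle type {2,2,2} (a product of three disjoint transpositions), σ₄ has cycle type {2,2,2,2} (a product of four disjoint transpositions), σ₁σ₂σ₃σ₄ = 1, and σ₁, σ₂, σ₃, σ₄ generate the full symmetric group S₈. -/

import Mathlib

/-!
The tuple is written down explicitly, so its cycle types and the product relation are finite
computations. For generation, an `n`-cycle together with a transposition of two cyclically adjacent
points generates `Sₙ`, and for our tuple both the rotation `i ↦ i + 1` of `Fin 8` and the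
transposition `(0 1)` are short words in the `σᵢ`.
-/

open Equiv Equiv.Perm

theorem Equiv.Perm.eq_top_of_finRotate_mem_of_swap_zero_one_mem {n : ℕ}
    {H : Subgroup (Perm (Fin (n + 2)))} (hrot : finRotate (n + 2) ∈ H) (hswap : swap 0 1 ∈ H) :
    H = ⊤ := by
  have hgen := closure_cycle_adjacent_swap isCycle_finRotate support_finRotate (0 : Fin (n + 2))
  rw [finRotate_apply, zero_add] at hgen
  rw [eq_top_iff, ← hgen, Subgroup.closure_le, Set.insert_subset_iff, Set.singleton_subset_iff]
  exact ⟨hrot, hswap⟩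

namespace S8BranchCycles

def σ₁ : Perm (Fin 8) := swap 3 4 * swap 4 5 * swap 0 6 * swap 1 7
def σ₂ : Perm (Fin 8) := swap 0 3 * swap 2 4 * swap 6 7
def σ₃ : Perm (Fin 8) := swap 0 1 * swap 2 3 * swap 4 6
def σ₄ : Perm (Fin 8) := swap 0 7 * swap 1 4 * swap 2 6 * swap 3 5

theorem cycleType_σ₁ : σ₁.cycleType = {3, 2, 2} := by decide
theorem cycleType_σ₂ : σ₂.cycleType = {2, 2, 2} := by decide
theorem cycleType_σ₃ : σ₃.cycleType = {2, 2, 2} := by decide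
theorem cycleType_σ₄ : σ₄.cycleType = {2, 2, 2, 2} := by decide

theorem σ₁_mul_σ₂_mul_σ₃_mul_σ₄ : σ₁ * σ₂ * σ₃ * σ₄ = 1 := by decide

set_option maxRecDepth 4000 in
theorem finRotate_eq_prod : finRotate 8 = [σ₁⁻¹, σ₃, σ₁, σ₁, σ₂, σ₁, σ₄, σ₂, σ₁].prod := by
  decide

set_option maxRecDepth 4000 in
theorem swap_zero_one_eq_prod : swap (0 : Fin 8) 1 = [σ₂, σ₃, σ₂, σ₁, σ₁, σ₄, σ₂, σ₃].prod := by
  decide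

theorem closure_eq_top : Subgroup.closure ({σ₁, σ₂, σ₃, σ₄} : Set (Perm (Fin 8))) = ⊤ := by
  set H := Subgroup.closure ({σ₁, σ₂, σ₃, σ₄} : Set (Perm (Fin 8)))
  have h₁ : σ₁ ∈ H := Subgroup.subset_closure (by simp)
  have h₂ : σ₂ ∈ H := Subgroup.subset_closure (by simp)
  have h₃ : σ₃ ∈ H := Subgroup.subset_closure (by simp)
  have h₄ : σ₄ ∈ H := Subgroup.subset_closure (by simp)
  apply eq_top_of_finRotate_mem_of_swap_zero_one_mem
  · rw [finRotate_eq_prod]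
    refine H.list_prod_mem ?_
    simp [h₁, h₂, h₃, h₄]
  · rw [swap_zero_one_eq_prod]
    refine H.list_prod_mem ?_
    simp [h₁, h₂, h₃, h₄]

end S8BranchCycles

open S8BranchCycles in
/-- There is a branch-cycle tuple in `S₈` of cycle types `((3)(2)², 2³, 2³, 2⁴)`
with product one generating the full `S₈`. -/
theorem stmt_7 : ∃ σ₁ σ₂ σ₃ σ₄ : Equiv.Perm (Fin 8),
    σ₁.cycleType = {3, 2, 2} ∧ σ₂.cycleType = {2, 2, 2} ∧ σ₃.cycleType = {2, 2, 2} ∧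
    σ₄.cycleType = {2, 2, 2, 2} ∧
    σ₁ * σ₂ * σ₃ * σ₄ = 1 ∧
    Subgroup.closure ({σ₁, σ₂, σ₃, σ₄} : Set (Equiv.Perm (Fin 8))) = ⊤ :=
  ⟨σ₁, σ₂, σ₃, σ₄, cycleType_σ₁, cycleType_σ₂, cycleType_σ₃, cycleType_σ₄,
    σ₁_mul_σ₂_mul_σ₃_mul_σ₄, closure_eq_top⟩
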